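/- For all imaginary octonions p and q with ⟨p,q⟩ = 0, and every octonion x, one has p(qx) = −q(px); equivalently, the left-multiplication operators by p and by q anticommute as ℝ-linear maps on 𝕆. -/

import Mathlib

/-! Octonions are left alternative, and linearizing `p (p x) = (p p) x` gives
`p (q x) + q (p x) = (p q + q p) x`. For imaginary `p`, `q` the anticommutator `p q + q p` is the
real scalar `-2 ⟨p, q⟩`, which vanishes when `p` and `q` are orthogonal. -/

noncomputable section

abbrev H := Quaternion ℝ

/-- The octonions 𝕆, as the Cayley–Dickson double of the quaternions:
pairs (a,b) of quaternions. -/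
def Oct : Type := H × H

namespace Oct

instance : AddCommGroup Oct := inferInstanceAs (AddCommGroup (H × H))
instance : Module ℝ Oct := inferInstanceAs (Module ℝ (H × H))

def mk' (a b : H) : Oct := (a, b)
def fst : Oct → H := Prod.fst
def snd : Oct → H := Prod.snd

/-- Cayley–Dickson multiplication: (a,b)·(c,d) = (ac − conj(d)b, da + b·conj(c)). -/
instance : Mul Oct :=
  ⟨fun p q => mk' (p.fst * q.fst - star q.snd * p.snd) (q.snd * p.fst + p.snd * star q.fst)⟩

instance : One Oct := ⟨mk' 1 0⟩

/-- Octonionic conjugation: conj (a,b) = (conj a, −b). -/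
def conj (p : Oct) : Oct := mk' (star p.fst) (-p.snd)

/-- The real part of an octonion, as a real scalar. -/
def re (p : Oct) : ℝ := (p.fst).re

/-- The bilinear form ⟨x,y⟩ = (x·conj(y) + y·conj(x))/2, a real scalar. -/
def oinner (p q : Oct) : ℝ := re (p * conj q + q * conj p) / 2

/-- The norm N(x) = x·conj(x), a real scalar. -/
def N (p : Oct) : ℝ := re (p * conj p)

/-- An octonion is imaginary if conj x = −x. -/
def IsIm (p : Oct) : Prop := conj p = -p

/-- The embedding of the reals into the octonions. -/
def oR (r : ℝ) : Oct := mk' (algebraMap ℝ H r) 0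

end Oct

open Oct

namespace Oct
@[ext] lemma ext {p q : Oct} (h₁ : fst p = fst q) (h₂ : snd p = snd q) : p = q := Prod.ext h₁ h₂
lemma fst_mul (p q : Oct) : fst (p * q) = fst p * fst q - star (snd q) * snd p := rfl
lemma snd_mul (p q : Oct) : snd (p * q) = snd q * fst p + snd p * star (fst q) := rfl
lemma fst_add (p q : Oct) : fst (p + q) = fst p + fst q := rfl
lemma snd_add (p q : Oct) : snd (p + q) = snd p + snd q := rfl
lemma fst_neg (p : Oct) : fst (-p) = -fst p := rfl
lemma snd_neg (p : Oct) : snd (-p) = -snd p := rfl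
lemma fst_smul (r : ℝ) (p : Oct) : fst (r • p) = r • fst p := rfl
lemma snd_smul (r : ℝ) (p : Oct) : snd (r • p) = r • snd p := rfl
lemma fst_oR (r : ℝ) : fst (oR r) = (r : H) := rfl
lemma snd_oR (r : ℝ) : snd (oR r) = 0 := rfl

lemma IsIm.star_fst {p : Oct} (hp : IsIm p) : star (fst p) = -fst p := congrArg fst hp

lemma oR_mul (r : ℝ) (x : Oct) : oR r * x = r • x := by
  ext : 1 <;> simp [fst_mul, snd_mul, fst_smul, snd_smul, fst_oR, snd_oR,
    Quaternion.coe_mul_eq_smul, Quaternion.mul_coe_eq_smul]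

lemma mul_neg (p q : Oct) : p * -q = -(p * q) := by
  ext : 1 <;> simp only [fst_mul, snd_mul, fst_neg, snd_neg, star_neg] <;> noncomm_ring

lemma oinner_eq_of_isIm {p q : Oct} (hp : IsIm p) (hq : IsIm q) :
    oinner p q = -re (p * q + q * p) / 2 := by
  rw [oinner, hp, hq, mul_neg, mul_neg, ← neg_add]
  rfl

lemma mul_add_mul_eq_oR_of_isIm {p q : Oct} (hp : IsIm p) (hq : IsIm q) :
    p * q + q * p = oR (re (p * q + q * p)) := by
  have ha := hp.star_fst
  have hc := hq.star_fst
  ext : 1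
  · have h_star_mul : fst q * fst p = star (fst p * fst q) := by
      rw [star_mul, ha, hc, neg_mul_neg]
    have h_star_snd : star (snd p) * snd q = star (star (snd q) * snd p) := by
      rw [star_mul, star_star]
    have h_real : fst (p * q + q * p) =
        ((2 * (fst p * fst q).re - 2 * (star (snd q) * snd p).re : ℝ) : H) := by
      rw [fst_add, fst_mul, fst_mul, h_star_mul, h_star_snd, Quaternion.coe_sub,
        ← Quaternion.self_add_star', ← Quaternion.self_add_star']
      abel
    rw [fst_oR, show re (p * q + q * p) = (fst (p * q + q * p)).re from rfl, h_real,
      Quaternion.re_coe]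
  · rw [snd_add, snd_mul, snd_mul, ha, hc, snd_oR]
    noncomm_ring

/-- Verified in real coordinates; for `p = (a, b)`, `q = (c, d)` it comes down to `a + star a`,
`c + star c` and `star d * b + star b * d` being real, hence central in `ℍ`. -/
lemma left_alternative_polarized (p q x : Oct) :
    p * (q * x) + q * (p * x) = (p * q + q * p) * x := by
  ext <;> simp only [fst_mul, snd_mul, fst_add, snd_add, Quaternion.re_mul,
    Quaternion.imI_mul, Quaternion.imJ_mul, Quaternion.imK_mul, Quaternion.re_sub,
    Quaternion.imI_sub, Quaternion.imJ_sub, Quaternion.imK_sub, Quaternion.re_add,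
    Quaternion.imI_add, Quaternion.imJ_add, Quaternion.imK_add, Quaternion.re_star,
    Quaternion.imI_star, Quaternion.imJ_star, Quaternion.imK_star] <;> ring

end Oct

open Oct

/-- For all imaginary octonions p and q with ⟨p,q⟩ = 0, and every octonion x,
one has p(qx) = −q(px): the left-multiplication operators by p and q anticommute. -/
theorem leftMul_anticommute (p q : Oct) (hp : IsIm p) (hq : IsIm q)
    (hpq : oinner p q = 0) (x : Oct) :
    p * (q * x) = -(q * (p * x)) := by
  have h_re : re (p * q + q * p) = 0 := by
    have := oinner_eq_of_isIm hp hq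
    linarith
  refine eq_neg_of_add_eq_zero_left ?_
  rw [left_alternative_polarized, mul_add_mul_eq_oR_of_isIm hp hq, h_re, oR_mul, zero_smul]
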